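/- Let M be a real n×n matrix with ‖M^i‖₂ ≤ C ρ^i for all i ≥ 0 for some C ≥ 1 and ρ ∈ (0,1), let σ > 0, let x₀ ∈ ℝⁿ, and let N ≥ 1 be an integer. Define Σ_i := σ² ∑_{k=0}^{i-1} M^k (Mᵀ)^k and Σ_∞ := σ² ∑_{k=0}^∞ M^k (Mᵀ)^k. Then ‖ N Σ_∞ − ∑_{i=0}^{N-1} ( M^i x₀ x₀ᵀ (M^i)ᵀ + Σ_i ) ‖₂ ≤ (C²/(1−ρ²)) · ( ‖x₀‖² + ‖Σ_∞‖₂ ). -/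

import Mathlib

/-!
Since `Σ_∞ = Σ_i + M^i Σ_∞ (M^i)ᵀ` (shift the series defining `Σ_∞` by `i`), the `i`-th
summand of the difference is `M^i (Σ_∞ - x₀ x₀ᵀ) (M^i)ᵀ`, of norm at most
`C² ρ^(2i) (‖Σ_∞‖₂ + ‖x₀‖²)`; summing the geometric series in `ρ²` gives the bound.
-/

open Matrix MeasureTheory ProbabilityTheory Filter

/-- Frobenius norm of a real matrix. -/
noncomputable def frob {α β : Type*} [Fintype α] [Fintype β] (A : Matrix α β ℝ) : ℝ :=
  Real.sqrt (∑ i, ∑ j, (A i j) ^ 2)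

/-- Spectral norm (largest singular value) of a real matrix. -/
noncomputable def spec {α β : Type*} [Fintype α] [Fintype β] [DecidableEq β]
    (A : Matrix α β ℝ) : ℝ :=
  ‖LinearMap.toContinuousLinearMap (Matrix.toEuclideanLin A)‖

/-- The positive semidefinite square root of a positive semidefinite real matrix
(junk value `0` if the matrix is not positive semidefinite). -/
noncomputable def msqrt {α : Type*} [Fintype α] [DecidableEq α]
    (M : Matrix α α ℝ) : Matrix α α ℝ :=
  open scoped Classical in
  if h : M.PosSemidef then
    (h.1.eigenvectorUnitary : Matrix α α ℝ) *
      diagonal ((↑) ∘ (Real.sqrt ·) ∘ h.1.eigenvalues) *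
      (star h.1.eigenvectorUnitary : Matrix α α ℝ) else 0

/-- Euclidean norm of a real vector. -/
noncomputable def vnorm {α : Type*} [Fintype α] (v : α → ℝ) : ℝ :=
  Real.sqrt (∑ i, (v i) ^ 2)

open scoped Matrix.Norms.L2Operator

section TopologicalRing

variable {R : Type*} [Ring R] [TopologicalSpace R] [IsTopologicalRing R] [T2Space R]

theorem Summable.tsum_pow_mul_pow_eq_sum_range_add {a b : R}
    (h : Summable fun k => a ^ k * b ^ k) (i : ℕ) :
    ∑' k, a ^ k * b ^ k =
      ∑ k ∈ Finset.range i, a ^ k * b ^ k + a ^ i * (∑' k, a ^ k * b ^ k) * b ^ i := by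
  have hshift : ∑' k, a ^ (k + i) * b ^ (k + i) = a ^ i * (∑' k, a ^ k * b ^ k) * b ^ i := by
    rw [← h.tsum_mul_left, ← (h.mul_left (a ^ i)).tsum_mul_right]
    exact tsum_congr fun k => by rw [pow_add, pow_add, pow_mul_comm a k i]; simp only [mul_assoc]
  rw [← hshift, h.sum_add_tsum_nat_add]

end TopologicalRing

theorem Matrix.smul_tsum_pow_mul_transpose_pow_eq {m : Type*} [Fintype m] [DecidableEq m]
    {M : Matrix m m ℝ} (h : Summable fun k => M ^ k * Mᵀ ^ k) (c : ℝ) (i : ℕ) :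
    c • ∑' k, M ^ k * Mᵀ ^ k =
      c • ∑ k ∈ Finset.range i, M ^ k * Mᵀ ^ k + M ^ i * (c • ∑' k, M ^ k * Mᵀ ^ k) * (M ^ i)ᵀ := by
  conv_lhs => rw [h.tsum_pow_mul_pow_eq_sum_range_add i]
  rw [smul_add, transpose_pow, mul_smul_comm, smul_mul_assoc]

theorem Matrix.vecMulVec_mulVec_mulVec {l m n o : Type*} {α : Type*} [CommSemiring α]
    [Fintype m] [Fintype n] (A : Matrix l m α) (B : Matrix o n α) (x : m → α) (y : n → α) :
    vecMulVec (A *ᵥ x) (B *ᵥ y) = A * vecMulVec x y * Bᵀ := by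
  rw [mul_vecMulVec, vecMulVec_mul, vecMul_transpose]

theorem sq_norm_pow_le_of_norm_pow_le {R : Type*} [SeminormedRing R] {a : R} {C ρ : ℝ}
    (ha : ∀ i : ℕ, ‖a ^ i‖ ≤ C * ρ ^ i) (i : ℕ) : ‖a ^ i‖ ^ 2 ≤ C ^ 2 * (ρ ^ 2) ^ i := by
  calc ‖a ^ i‖ ^ 2 ≤ (C * ρ ^ i) ^ 2 := pow_le_pow_left₀ (norm_nonneg _) (ha i) 2
    _ = C ^ 2 * (ρ ^ 2) ^ i := by ring

section L2OpNorm

variable {m n : Type*} [Fintype m] [Fintype n]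

theorem vnorm_eq_norm_toLp (v : m → ℝ) : vnorm v = ‖WithLp.toLp 2 v‖ := by
  simp [vnorm, EuclideanSpace.norm_eq]

variable [DecidableEq n]

theorem spec_eq_l2_opNorm (A : Matrix m n ℝ) : spec A = ‖A‖ := rfl

theorem Matrix.l2_opNorm_vecMulVec (x : m → ℝ) (y : n → ℝ) :
    ‖vecMulVec x y‖ = vnorm x * vnorm y := by
  have h := InnerProductSpace.symm_toEuclideanLin_rankOne (WithLp.toLp 2 x) (WithLp.toLp 2 y)
  simp only [star_trivial] at h
  rw [vnorm_eq_norm_toLp, vnorm_eq_norm_toLp, ← h, l2_opNorm_def, LinearEquiv.trans_apply,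
    LinearEquiv.apply_symm_apply]
  exact InnerProductSpace.norm_rankOne _ _

variable [DecidableEq m]

theorem Matrix.l2_opNorm_transpose (A : Matrix m n ℝ) : ‖Aᵀ‖ = ‖A‖ := by
  rw [← conjTranspose_eq_transpose_of_trivial, l2_opNorm_conjTranspose]

theorem Matrix.l2_opNorm_mul_mul_transpose_le (A : Matrix m n ℝ) (S : Matrix n n ℝ) :
    ‖A * S * Aᵀ‖ ≤ ‖A‖ ^ 2 * ‖S‖ :=
  calc ‖A * S * Aᵀ‖ ≤ ‖A‖ * ‖S‖ * ‖Aᵀ‖ :=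
        (l2_opNorm_mul _ _).trans (by gcongr; exact l2_opNorm_mul _ _)
    _ = ‖A‖ ^ 2 * ‖S‖ := by rw [l2_opNorm_transpose]; ring

end L2OpNorm

section ExponentiallyStable

variable {m : Type*} [Fintype m] [DecidableEq m] {M : Matrix m m ℝ} {C ρ : ℝ}

theorem summable_pow_mul_transpose_pow (hM : ∀ i : ℕ, ‖M ^ i‖ ≤ C * ρ ^ i) (hρ : |ρ| < 1) :
    Summable fun k => M ^ k * Mᵀ ^ k := by
  have hρ2 : ρ ^ 2 < 1 := by rwa [sq_lt_one_iff_abs_lt_one]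
  refine .of_norm_bounded ((summable_geometric_of_lt_one (sq_nonneg ρ) hρ2).mul_left (C ^ 2))
    fun k => ?_
  calc ‖M ^ k * Mᵀ ^ k‖ ≤ ‖M ^ k‖ * ‖(M ^ k)ᵀ‖ := by rw [transpose_pow]; exact l2_opNorm_mul _ _
    _ = ‖M ^ k‖ ^ 2 := by rw [l2_opNorm_transpose, sq]
    _ ≤ C ^ 2 * (ρ ^ 2) ^ k := sq_norm_pow_le_of_norm_pow_le hM k

theorem norm_sum_range_pow_mul_mul_transpose_pow_le (hM : ∀ i : ℕ, ‖M ^ i‖ ≤ C * ρ ^ i)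
    (hρ : |ρ| < 1) (D : Matrix m m ℝ) (N : ℕ) :
    ‖∑ i ∈ Finset.range N, M ^ i * D * (M ^ i)ᵀ‖ ≤ C ^ 2 / (1 - ρ ^ 2) * ‖D‖ := by
  have hρ2 : ρ ^ 2 < 1 := by rwa [sq_lt_one_iff_abs_lt_one]
  have hgeom : ∑ i ∈ Finset.range N, (ρ ^ 2) ^ i ≤ (1 - ρ ^ 2)⁻¹ := by
    rw [← tsum_geometric_of_lt_one (sq_nonneg ρ) hρ2]
    exact (summable_geometric_of_lt_one (sq_nonneg ρ) hρ2).sum_le_tsum _ fun i _ => by positivity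
  calc ‖∑ i ∈ Finset.range N, M ^ i * D * (M ^ i)ᵀ‖
      ≤ ∑ i ∈ Finset.range N, C ^ 2 * (ρ ^ 2) ^ i * ‖D‖ := by
        refine norm_sum_le_of_le _ fun i _ => (l2_opNorm_mul_mul_transpose_le _ _).trans ?_
        gcongr
        exact sq_norm_pow_le_of_norm_pow_le hM i
    _ = C ^ 2 * ‖D‖ * ∑ i ∈ Finset.range N, (ρ ^ 2) ^ i := by
        rw [Finset.mul_sum]; exact Finset.sum_congr rfl fun i _ => by ring
    _ ≤ C ^ 2 * ‖D‖ * (1 - ρ ^ 2)⁻¹ := by gcongr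
    _ = C ^ 2 / (1 - ρ ^ 2) * ‖D‖ := by ring

end ExponentiallyStable

theorem conditional_second_moment_concentration_general {n : ℕ}
    (M : Matrix (Fin n) (Fin n) ℝ) (C ρ σ : ℝ) (x0 : Fin n → ℝ) (N : ℕ)
    (hρ : ρ ∈ Set.Ioo (0 : ℝ) 1)
    (hM : ∀ i : ℕ, spec (M ^ i) ≤ C * ρ ^ i) :
    spec ((N : ℝ) • (σ ^ 2 • ∑' k : ℕ, M ^ k * Mᵀ ^ k)
        - ∑ i ∈ Finset.range N,
            (vecMulVec ((M ^ i) *ᵥ x0) ((M ^ i) *ᵥ x0)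
              + σ ^ 2 • ∑ k ∈ Finset.range i, M ^ k * Mᵀ ^ k))
      ≤ C ^ 2 / (1 - ρ ^ 2) *
          (vnorm x0 ^ 2 + spec (σ ^ 2 • ∑' k : ℕ, M ^ k * Mᵀ ^ k)) := by
  have hρ_abs : |ρ| < 1 := abs_lt.mpr ⟨by linarith [hρ.1], hρ.2⟩
  simp only [spec_eq_l2_opNorm] at hM ⊢
  have hS := smul_tsum_pow_mul_transpose_pow_eq (summable_pow_mul_transpose_pow hM hρ_abs) (σ ^ 2)
  set S := σ ^ 2 • ∑' k : ℕ, M ^ k * Mᵀ ^ k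
  have hdiff : (N : ℝ) • S - ∑ i ∈ Finset.range N,
      (vecMulVec ((M ^ i) *ᵥ x0) ((M ^ i) *ᵥ x0) + σ ^ 2 • ∑ k ∈ Finset.range i, M ^ k * Mᵀ ^ k)
      = ∑ i ∈ Finset.range N, M ^ i * (S - vecMulVec x0 x0) * (M ^ i)ᵀ := by
    rw [show (N : ℝ) • S = ∑ _i ∈ Finset.range N, S by simp [Nat.cast_smul_eq_nsmul],
      ← Finset.sum_sub_distrib]
    refine Finset.sum_congr rfl fun i _ => ?_
    rw [vecMulVec_mulVec_mulVec, mul_sub, sub_mul]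
    nth_rewrite 1 [hS i]
    abel
  have hK : 0 ≤ C ^ 2 / (1 - ρ ^ 2) :=
    div_nonneg (sq_nonneg C) (sub_nonneg.mpr ((sq_lt_one_iff_abs_lt_one ρ).mpr hρ_abs).le)
  calc _ = ‖∑ i ∈ Finset.range N, M ^ i * (S - vecMulVec x0 x0) * (M ^ i)ᵀ‖ := by rw [hdiff]
    _ ≤ C ^ 2 / (1 - ρ ^ 2) * ‖S - vecMulVec x0 x0‖ :=
        norm_sum_range_pow_mul_mul_transpose_pow_le hM hρ_abs _ N
    _ ≤ C ^ 2 / (1 - ρ ^ 2) * (vnorm x0 ^ 2 + ‖S‖) := by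
        rw [add_comm (vnorm x0 ^ 2), sq (vnorm x0), ← l2_opNorm_vecMulVec]
        exact mul_le_mul_of_nonneg_left (norm_sub_le _ _) hK

theorem conditional_second_moment_concentration {n : ℕ}
    (M : Matrix (Fin n) (Fin n) ℝ) (C ρ σ : ℝ) (x0 : Fin n → ℝ) (N : ℕ)
    (hC : 1 ≤ C) (hρ : ρ ∈ Set.Ioo (0 : ℝ) 1) (hσ : 0 < σ) (hN : 1 ≤ N)
    (hM : ∀ i : ℕ, spec (M ^ i) ≤ C * ρ ^ i) :
    spec ((N : ℝ) • (σ ^ 2 • ∑' k : ℕ, M ^ k * Mᵀ ^ k)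
        - ∑ i ∈ Finset.range N,
            (vecMulVec ((M ^ i) *ᵥ x0) ((M ^ i) *ᵥ x0)
              + σ ^ 2 • ∑ k ∈ Finset.range i, M ^ k * Mᵀ ^ k))
      ≤ C ^ 2 / (1 - ρ ^ 2) *
          (vnorm x0 ^ 2 + spec (σ ^ 2 • ∑' k : ℕ, M ^ k * Mᵀ ^ k)) :=
  conditional_second_moment_concentration_general M C ρ σ x0 N hρ hM
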